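/- arXiv:1212.6288 — 3 statements merged into one kernel-verified Lean document; each statement's English description precedes it below -/
import Mathlib

section
/- The bilinear bracket defined on the free real vector space with basis {L_m, J_m, P¹_m, P²_m : m ∈ ℤ} ∪ {α, β} by [L_m,L_n] = (m−n)L_{m+n} + (α/12)·m(m²−1)·δ_{m+n,0}, [L_m,P^i_n] = (m−n)P^i_{m+n}, [L_m,J_n] = −n·J_{m+n}, [J_m,P^i_n] = Σ_j ε_{ij} P^j_{m+n}, [J_m,J_n] = β·m·δ_{m+n,0}, [P^i_m,P^j_n] = 0, and with α, β central (all other brackets of basis elements zero), extended bilinearly, is antisymmetric and satisfies the Jacobi identity; hence it makes this vector space a real Lie algebra (denoted 𝔤). -/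
/-!
STATEMENT 0: The bilinear bracket on the free real vector space with basis
{L_m, J_m, P¹_m, P²_m : m ∈ ℤ} ∪ {α, β} defined by
[L_m,L_n] = (m−n)L_{m+n} + (α/12)·m(m²−1)·δ_{m+n,0},
[L_m,P^i_n] = (m−n)P^i_{m+n}, [L_m,J_n] = −n·J_{m+n},
[J_m,P^i_n] = Σ_j ε_{ij} P^j_{m+n}, [J_m,J_n] = β·m·δ_{m+n,0},
[P^i_m,P^j_n] = 0, with α, β central, extended bilinearly,
is antisymmetric and satisfies the Jacobi identity (hence gives a real Lie algebra 𝔤).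
-/

/-- Basis of the centrally extended planar Galilean conformal algebra 𝔤:
`L m`, `J m`, `P i m` (i ∈ {1,2} represented by `Fin 2`, m ∈ ℤ) and the
central elements `Ca` (called α) and `Cb` (called β). -/
inductive GBasis : Type
  | L : ℤ → GBasis
  | J : ℤ → GBasis
  | P : Fin 2 → ℤ → GBasis
  | Ca : GBasis
  | Cb : GBasis
  deriving DecidableEq

noncomputable section

/-- The antisymmetric symbol: ε_{12} = −ε_{21} = 1, ε_{11} = ε_{22} = 0
(indices 1,2 are represented by 0,1 : Fin 2). -/
def eps (i j : Fin 2) : ℝ :=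
  if i = j then 0 else if i = (0 : Fin 2) then 1 else -1

/-- The vector space underlying 𝔤: the free real vector space on `GBasis`. -/
abbrev GCA : Type := GBasis →₀ ℝ

/-- The bracket on basis elements. -/
def bracketB : GBasis → GBasis → GCA
  | .L m, .L n =>
      ((m : ℝ) - n) • Finsupp.single (.L (m + n)) 1 +
        (if m + n = 0 then ((m : ℝ) * ((m : ℝ) ^ 2 - 1) / 12) • Finsupp.single .Ca 1
         else 0)
  | .L m, .P i n => ((m : ℝ) - n) • Finsupp.single (.P i (m + n)) 1
  | .P i n, .L m => -(((m : ℝ) - n) • Finsupp.single (.P i (m + n)) 1)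
  | .L m, .J n => (-(n : ℝ)) • Finsupp.single (.J (m + n)) 1
  | .J n, .L m => ((n : ℝ)) • Finsupp.single (.J (m + n)) 1
  | .J m, .P i n => ∑ j : Fin 2, eps i j • Finsupp.single (.P j (m + n)) 1
  | .P i n, .J m => -(∑ j : Fin 2, eps i j • Finsupp.single (.P j (m + n)) 1)
  | .J m, .J n => if m + n = 0 then (m : ℝ) • Finsupp.single .Cb 1 else 0
  | _, _ => 0

/-- The bracket, extended bilinearly from the basis to all of 𝔤. -/
def bracket (x y : GCA) : GCA :=
  x.sum fun bx cx => y.sum fun bz cz => (cx * cz) • bracketB bx bz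

/-! Both identities are multilinear, so they need only be checked on basis vectors, and the
Jacobiator is invariant under cyclic permutations of its arguments. This leaves seven cyclic
classes of triples of generators, in each of which the identity reduces to a polynomial identity
in the mode numbers; for three `L`'s it is the cocycle identity of the Virasoro term on
`m + n + p = 0`. Triples containing a central element, two `P`'s or three `J`'s contribute
nothing. -/

namespace LinearMap

variable {R M ι : Type*} [CommRing R] [AddCommGroup M] [Module R M]

def jacobiator (B : M →ₗ[R] M →ₗ[R] M) (x y z : M) : M :=
  B x (B y z) + B y (B z x) + B z (B x y)

theorem jacobiator_rotate (B : M →ₗ[R] M →ₗ[R] M) (x y z : M) :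
    B.jacobiator x y z = B.jacobiator y z x := by
  unfold jacobiator
  abel

theorem jacobiator_eq_zero_of_basis_left (b : Module.Basis ι R M) (B : M →ₗ[R] M →ₗ[R] M)
    {y z : M} (h : ∀ i, B.jacobiator (b i) y z = 0) (x : M) : B.jacobiator x y z = 0 := by
  -- `x ↦ B.jacobiator x y z`, as a linear map
  have : B.flip (B y z) + B y ∘ₗ B z + B z ∘ₗ B.flip y = 0 := b.ext h
  exact DFunLike.congr_fun this x

theorem jacobiator_eq_zero_of_basis (b : Module.Basis ι R M) (B : M →ₗ[R] M →ₗ[R] M)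
    (h : ∀ i j k, B.jacobiator (b i) (b j) (b k) = 0) (x y z : M) : B.jacobiator x y z = 0 := by
  refine jacobiator_eq_zero_of_basis_left b B (fun i ↦ ?_) x
  rw [jacobiator_rotate]
  refine jacobiator_eq_zero_of_basis_left b B (fun j ↦ ?_) y
  rw [jacobiator_rotate]
  exact jacobiator_eq_zero_of_basis_left b B (fun k ↦ by rw [jacobiator_rotate]; exact h i j k) z

theorem antisymm_of_basis (b : Module.Basis ι R M) (B : M →ₗ[R] M →ₗ[R] M)
    (h : ∀ i j, B (b i) (b j) = -B (b j) (b i)) (x y : M) : B x y = -B y x := by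
  have : B = -B.flip := ext_basis b b h
  exact congr_fun₂ this x y

end LinearMap

open Finsupp

def bracketₗ : GCA →ₗ[ℝ] GCA →ₗ[ℝ] GCA :=
  linearCombination ℝ fun a ↦ linearCombination ℝ (bracketB a)

theorem bracket_eq_bracketₗ (x y : GCA) : bracket x y = bracketₗ x y := by
  simp only [bracket, bracketₗ, linearCombination_apply, LinearMap.finsupp_sum_apply,
    LinearMap.smul_apply, smul_sum, smul_smul]

theorem bracketₗ_single_one (a : GBasis) (v : GCA) :
    bracketₗ (single a 1) v = linearCombination ℝ (bracketB a) v := by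
  simp [bracketₗ]

theorem bracketB_antisymm (a b : GBasis) : bracketB a b = -bracketB b a := by
  cases a <;> cases b
  case L.L m n =>
    simp only [bracketB, add_comm n m]
    split_ifs with h
    · obtain rfl : n = -m := by omega
      match_scalars <;> ring
    · match_scalars
      ring
  case J.J m n =>
    simp only [bracketB, add_comm n m]
    split_ifs with h
    · obtain rfl : n = -m := by omega
      match_scalars
      ring
    · rw [neg_zero]
  all_goals simp [bracketB]

theorem jacobiator_L_L_L (m n p : ℤ) :
    bracketₗ.jacobiator (single (.L m) 1) (single (.L n) 1) (single (.L p) 1) = 0 := by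
  simp only [LinearMap.jacobiator, bracketₗ_single_one, bracketB, linearCombination_single,
    map_add, map_smul, map_zero, apply_ite (linearCombination ℝ _), smul_add, smul_zero,
    smul_smul, one_smul, ite_self, add_zero]
  ring_nf
  split_ifs with h
  · obtain rfl : p = -m - n := by omega
    match_scalars <;> ring
  · match_scalars
    ring

theorem jacobiator_L_L_J (m n p : ℤ) :
    bracketₗ.jacobiator (single (.L m) 1) (single (.L n) 1) (single (.J p) 1) = 0 := by
  simp only [LinearMap.jacobiator, bracketₗ_single_one, bracketB, linearCombination_single,
    map_add, map_smul, map_zero, apply_ite (linearCombination ℝ _), smul_add, smul_zero,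
    smul_smul, one_smul, ite_self, add_zero]
  ring_nf
  match_scalars
  ring

theorem jacobiator_L_L_P (m n p : ℤ) (i : Fin 2) :
    bracketₗ.jacobiator (single (.L m) 1) (single (.L n) 1) (single (.P i p) 1) = 0 := by
  simp only [LinearMap.jacobiator, bracketₗ_single_one, bracketB, linearCombination_single,
    map_add, map_smul, map_neg, map_zero, apply_ite (linearCombination ℝ _), smul_add,
    smul_zero, smul_smul, smul_neg, one_smul, ite_self, add_zero]
  ring_nf
  match_scalars
  ring

theorem jacobiator_L_J_J (m n p : ℤ) :
    bracketₗ.jacobiator (single (.L m) 1) (single (.J n) 1) (single (.J p) 1) = 0 := by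
  simp only [LinearMap.jacobiator, bracketₗ_single_one, bracketB, linearCombination_single,
    map_smul, map_zero, apply_ite (linearCombination ℝ _), smul_zero, smul_smul, one_smul,
    ite_self, zero_add]
  ring_nf
  split_ifs
  · match_scalars
    ring
  · rw [smul_zero, smul_zero, add_zero]

theorem jacobiator_L_J_P (m n p : ℤ) (i : Fin 2) :
    bracketₗ.jacobiator (single (.L m) 1) (single (.J n) 1) (single (.P i p) 1) = 0 := by
  simp only [LinearMap.jacobiator, bracketₗ_single_one, bracketB, linearCombination_single,
    map_add, map_smul, map_neg, Fin.sum_univ_two, smul_add, smul_smul, smul_neg]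
  ring_nf
  match_scalars <;> ring

theorem jacobiator_L_P_J (m n p : ℤ) (i : Fin 2) :
    bracketₗ.jacobiator (single (.L m) 1) (single (.P i n) 1) (single (.J p) 1) = 0 := by
  simp only [LinearMap.jacobiator, bracketₗ_single_one, bracketB, linearCombination_single,
    map_add, map_smul, map_neg, Fin.sum_univ_two, smul_add, smul_smul, smul_neg]
  ring_nf
  match_scalars <;> ring

theorem jacobiator_J_J_P (m n p : ℤ) (i : Fin 2) :
    bracketₗ.jacobiator (single (.J m) 1) (single (.J n) 1) (single (.P i p) 1) = 0 := by
  simp only [LinearMap.jacobiator, bracketₗ_single_one, bracketB, linearCombination_single,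
    map_add, map_smul, map_neg, map_zero, apply_ite (linearCombination ℝ _), Fin.sum_univ_two,
    smul_add, smul_zero, smul_smul, smul_neg, one_smul, ite_self, add_zero]
  ring_nf
  match_scalars <;> ring

theorem jacobiator_bracketₗ_single (a b c : GBasis) :
    bracketₗ.jacobiator (single a 1) (single b 1) (single c 1) = 0 := by
  cases a <;> cases b <;> cases c
  case L.L.L m n p => exact jacobiator_L_L_L m n p
  case L.L.J m n p => exact jacobiator_L_L_J m n p
  case L.J.L m n p => rw [← LinearMap.jacobiator_rotate]; exact jacobiator_L_L_J p m n
  case J.L.L m n p => rw [LinearMap.jacobiator_rotate]; exact jacobiator_L_L_J n p m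
  case L.L.P m n i p => exact jacobiator_L_L_P m n p i
  case L.P.L m i n p => rw [← LinearMap.jacobiator_rotate]; exact jacobiator_L_L_P p m n i
  case P.L.L i m n p => rw [LinearMap.jacobiator_rotate]; exact jacobiator_L_L_P n p m i
  case L.J.J m n p => exact jacobiator_L_J_J m n p
  case J.J.L m n p => rw [← LinearMap.jacobiator_rotate]; exact jacobiator_L_J_J p m n
  case J.L.J m n p => rw [LinearMap.jacobiator_rotate]; exact jacobiator_L_J_J n p m
  case L.J.P m n i p => exact jacobiator_L_J_P m n p i
  case J.P.L m i n p => rw [← LinearMap.jacobiator_rotate]; exact jacobiator_L_J_P p m n i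
  case P.L.J i m n p => rw [LinearMap.jacobiator_rotate]; exact jacobiator_L_J_P n p m i
  case L.P.J m i n p => exact jacobiator_L_P_J m n p i
  case P.J.L i m n p => rw [← LinearMap.jacobiator_rotate]; exact jacobiator_L_P_J p m n i
  case J.L.P m n i p => rw [LinearMap.jacobiator_rotate]; exact jacobiator_L_P_J n p m i
  case J.J.P m n i p => exact jacobiator_J_J_P m n p i
  case J.P.J m i n p => rw [← LinearMap.jacobiator_rotate]; exact jacobiator_J_J_P p m n i
  case P.J.J i m n p => rw [LinearMap.jacobiator_rotate]; exact jacobiator_J_J_P n p m i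
  all_goals
    simp [LinearMap.jacobiator, bracketₗ_single_one, bracketB, apply_ite (linearCombination ℝ _)]

/-- The bracket of the centrally extended planar Galilean conformal algebra is
antisymmetric and satisfies the Jacobi identity; hence it makes the free real
vector space on the basis a real Lie algebra. -/
theorem bracket_antisymm_and_jacobi :
    (∀ x y : GCA, bracket x y = -bracket y x) ∧
    (∀ x y z : GCA,
      bracket x (bracket y z) + bracket y (bracket z x) + bracket z (bracket x y) = 0) := by
  simp only [bracket_eq_bracketₗ]
  refine ⟨bracketₗ.antisymm_of_basis Finsupp.basisSingleOne fun a b ↦ ?_,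
    bracketₗ.jacobiator_eq_zero_of_basis Finsupp.basisSingleOne fun a b c ↦ ?_⟩
  · simpa [bracketₗ_single_one] using bracketB_antisymm a b
  · simpa using jacobiator_bracketₗ_single a b c

end
end

section
/- For smooth functions f,g : ℝ → ℝ, define linear operators on the space of smooth real-valued functions of (θ,x₁,x₂) ∈ ℝ³ by L_f = f(θ)∂_θ + f'(θ)(x₁∂_{x₁} + x₂∂_{x₂}), J_f = f(θ)(x₁∂_{x₂} − x₂∂_{x₁}), and P^i_f = f(θ)∂_{x_i} for i = 1,2. Then their commutators [A,B] = A∘B − B∘A satisfy [L_f,L_g] = L_{fg'−f'g}, [L_f,P^i_g] = P^i_{fg'−f'g}, [L_f,J_g] = J_{fg'}, [J_f,P^i_g] = −Σ_k ε_{ik} P^k_{fg}, and [J_f,J_g] = [P^i_f,P^j_g] = 0. -/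
/-!
STATEMENT 4: The current-algebra realization
L_f = f(θ)∂_θ + f'(θ)(x₁∂_{x₁} + x₂∂_{x₂}), J_f = f(θ)(x₁∂_{x₂} − x₂∂_{x₁}),
P^i_f = f(θ)∂_{x_i} on smooth functions of (θ,x₁,x₂) ∈ ℝ³ satisfies
[L_f,L_g] = L_{fg'−f'g}, [L_f,P^i_g] = P^i_{fg'−f'g}, [L_f,J_g] = J_{fg'},
[J_f,P^i_g] = −Σ_k ε_{ik} P^k_{fg}, [J_f,J_g] = [P^i_f,P^j_g] = 0.
-/

noncomputable section

open scoped BigOperators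

/-- Partial derivative in the variable `θ`. -/
def Dθ (F : ℝ → ℝ → ℝ → ℝ) : ℝ → ℝ → ℝ → ℝ :=
  fun θ x₁ x₂ => deriv (fun s => F s x₁ x₂) θ

/-- Partial derivative in the space variable `x₁`. -/
def Dx₁ (F : ℝ → ℝ → ℝ → ℝ) : ℝ → ℝ → ℝ → ℝ :=
  fun θ x₁ x₂ => deriv (fun y => F θ y x₂) x₁

/-- Partial derivative in the space variable `x₂`. -/
def Dx₂ (F : ℝ → ℝ → ℝ → ℝ) : ℝ → ℝ → ℝ → ℝ :=
  fun θ x₁ x₂ => deriv (fun y => F θ x₁ y) x₂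

/-- The operator L_f = f(θ)∂_θ + f'(θ)(x₁∂_{x₁} + x₂∂_{x₂}). -/
def opL (f : ℝ → ℝ) (F : ℝ → ℝ → ℝ → ℝ) : ℝ → ℝ → ℝ → ℝ :=
  fun θ x₁ x₂ =>
    f θ * Dθ F θ x₁ x₂ + deriv f θ * (x₁ * Dx₁ F θ x₁ x₂ + x₂ * Dx₂ F θ x₁ x₂)

/-- The operator J_f = f(θ)(x₁∂_{x₂} − x₂∂_{x₁}). -/
def opJ (f : ℝ → ℝ) (F : ℝ → ℝ → ℝ → ℝ) : ℝ → ℝ → ℝ → ℝ :=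
  fun θ x₁ x₂ => f θ * (x₁ * Dx₂ F θ x₁ x₂ - x₂ * Dx₁ F θ x₁ x₂)

/-- The operator P^i_f = f(θ)∂_{x_i}, i = 1,2. -/
def opP (i : Fin 2) (f : ℝ → ℝ) (F : ℝ → ℝ → ℝ → ℝ) : ℝ → ℝ → ℝ → ℝ :=
  fun θ x₁ x₂ =>
    f θ * (if i = (0 : Fin 2) then Dx₁ F θ x₁ x₂ else Dx₂ F θ x₁ x₂)


/-! ### Auxiliary machinery: directional derivatives on `ℝ × ℝ × ℝ` -/

abbrev V : Type := ℝ × ℝ × ℝ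

def Dv (v : V) (H : V → ℝ) : V → ℝ := fun p => fderiv ℝ H p v

def e0 : V := (1,0,0)
def e1 : V := (0,1,0)
def e2 : V := (0,0,1)

def unc (F : ℝ → ℝ → ℝ → ℝ) : V → ℝ := fun q => F q.1 q.2.1 q.2.2

open scoped ContDiff

lemma Dv_contDiff {H : V → ℝ} (h : ContDiff ℝ ∞ H) (v : V) : ContDiff ℝ ∞ (Dv v H) :=
  (h.fderiv_right (by norm_num)).clm_apply contDiff_const

lemma Dv_symm {H : V → ℝ} (h : ContDiff ℝ ∞ H) (v w : V) (p : V) :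
    Dv v (Dv w H) p = Dv w (Dv v H) p := by
  have hd : ContDiff ℝ ∞ (fun q => fderiv ℝ H q) := h.fderiv_right (by norm_num)
  have key : ∀ u u' : V, Dv u (Dv u' H) p = fderiv ℝ (fderiv ℝ H) p u u' := by
    intro u u'
    have := fderiv_clm_apply (c := fun q => fderiv ℝ H q) (u := fun _ => u')
      ((hd.differentiable (by norm_num)) p) (differentiableAt_const u')
    beta_reduce at this
    show fderiv ℝ (fun y => (fderiv ℝ H y) u') p u = _
    rw [this]
    simp
  rw [key, key]
  exact second_derivative_symmetric
    (fun y => ((h.differentiable (by norm_num)) y).hasFDerivAt)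
    (((hd.differentiable (by norm_num)) p).hasFDerivAt) v w

lemma Dv_add {a b : V → ℝ} {p : V} (ha : DifferentiableAt ℝ a p)
    (hb : DifferentiableAt ℝ b p) (v : V) :
    Dv v (fun q => a q + b q) p = Dv v a p + Dv v b p := by
  simp [Dv, fderiv_fun_add ha hb]

lemma Dv_sub {a b : V → ℝ} {p : V} (ha : DifferentiableAt ℝ a p)
    (hb : DifferentiableAt ℝ b p) (v : V) :
    Dv v (fun q => a q - b q) p = Dv v a p - Dv v b p := by
  simp [Dv, fderiv_fun_sub ha hb]

lemma Dv_mul {a b : V → ℝ} {p : V} (ha : DifferentiableAt ℝ a p)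
    (hb : DifferentiableAt ℝ b p) (v : V) :
    Dv v (fun q => a q * b q) p = Dv v a p * b p + a p * Dv v b p := by
  simp [Dv, fderiv_fun_mul ha hb]; ring

lemma Dv_fst {c : ℝ → ℝ} {p : V} (hc : DifferentiableAt ℝ c p.1) (v : V) :
    Dv v (fun q => c q.1) p = deriv c p.1 * v.1 := by
  have h1 : HasFDerivAt (fun q : V => q.1) (ContinuousLinearMap.fst ℝ ℝ (ℝ × ℝ)) p :=
    (ContinuousLinearMap.fst ℝ ℝ (ℝ × ℝ)).hasFDerivAt
  have h2 := (hc.hasDerivAt.hasFDerivAt.comp p h1)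
  have h3 : HasFDerivAt (fun q : V => c q.1)
      ((ContinuousLinearMap.smulRight 1 (deriv c p.1)).comp
        (ContinuousLinearMap.fst ℝ ℝ (ℝ × ℝ))) p := h2
  simp only [Dv]
  rw [h3.fderiv]
  simp [mul_comm]

lemma Dv_x1 {p : V} (v : V) : Dv v (fun q : V => q.2.1) p = v.2.1 := by
  have h1 : HasFDerivAt (fun q : V => q.2.1)
      ((ContinuousLinearMap.fst ℝ ℝ ℝ).comp (ContinuousLinearMap.snd ℝ ℝ (ℝ × ℝ))) p :=
    ((ContinuousLinearMap.fst ℝ ℝ ℝ).comp (ContinuousLinearMap.snd ℝ ℝ (ℝ × ℝ))).hasFDerivAt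
  simp [Dv, h1.fderiv]

lemma Dv_x2 {p : V} (v : V) : Dv v (fun q : V => q.2.2) p = v.2.2 := by
  have h1 : HasFDerivAt (fun q : V => q.2.2)
      ((ContinuousLinearMap.snd ℝ ℝ ℝ).comp (ContinuousLinearMap.snd ℝ ℝ (ℝ × ℝ))) p :=
    ((ContinuousLinearMap.snd ℝ ℝ ℝ).comp (ContinuousLinearMap.snd ℝ ℝ (ℝ × ℝ))).hasFDerivAt
  simp [Dv, h1.fderiv]

lemma Dθ_eq {H : V → ℝ} (h : Differentiable ℝ H) (θ x₁ x₂ : ℝ) :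
    Dθ (fun a b c => H (a,b,c)) θ x₁ x₂ = Dv e0 H (θ,x₁,x₂) := by
  have hc : HasDerivAt (fun s : ℝ => ((s, x₁, x₂) : V)) e0 θ :=
    (hasDerivAt_id θ).prodMk ((hasDerivAt_const θ x₁).prodMk (hasDerivAt_const θ x₂))
  have h2 := (h (θ,x₁,x₂)).hasFDerivAt.comp_hasDerivAt θ hc
  have h3 : HasDerivAt (fun s : ℝ => H (s, x₁, x₂)) (Dv e0 H (θ,x₁,x₂)) θ := h2
  simpa [Dθ] using h3.deriv

lemma Dx₁_eq {H : V → ℝ} (h : Differentiable ℝ H) (θ x₁ x₂ : ℝ) :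
    Dx₁ (fun a b c => H (a,b,c)) θ x₁ x₂ = Dv e1 H (θ,x₁,x₂) := by
  have hc : HasDerivAt (fun s : ℝ => ((θ, s, x₂) : V)) e1 x₁ :=
    (hasDerivAt_const x₁ θ).prodMk ((hasDerivAt_id x₁).prodMk (hasDerivAt_const x₁ x₂))
  have h2 := (h (θ,x₁,x₂)).hasFDerivAt.comp_hasDerivAt x₁ hc
  have h3 : HasDerivAt (fun s : ℝ => H (θ, s, x₂)) (Dv e1 H (θ,x₁,x₂)) x₁ := h2
  simpa [Dx₁] using h3.deriv

lemma Dx₂_eq {H : V → ℝ} (h : Differentiable ℝ H) (θ x₁ x₂ : ℝ) :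
    Dx₂ (fun a b c => H (a,b,c)) θ x₁ x₂ = Dv e2 H (θ,x₁,x₂) := by
  have hc : HasDerivAt (fun s : ℝ => ((θ, x₁, s) : V)) e2 x₂ :=
    (hasDerivAt_const x₂ θ).prodMk ((hasDerivAt_const x₂ x₁).prodMk (hasDerivAt_id x₂))
  have h2 := (h (θ,x₁,x₂)).hasFDerivAt.comp_hasDerivAt x₂ hc
  have h3 : HasDerivAt (fun s : ℝ => H (θ, x₁, s)) (Dv e2 H (θ,x₁,x₂)) x₂ := h2
  simpa [Dx₂] using h3.deriv

def Lu (c : ℝ → ℝ) (H : V → ℝ) : V → ℝ :=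
  fun p => c p.1 * Dv e0 H p + deriv c p.1 * (p.2.1 * Dv e1 H p + p.2.2 * Dv e2 H p)

def Ju (c : ℝ → ℝ) (H : V → ℝ) : V → ℝ :=
  fun p => c p.1 * (p.2.1 * Dv e2 H p - p.2.2 * Dv e1 H p)

def Pu (e : V) (c : ℝ → ℝ) (H : V → ℝ) : V → ℝ := fun p => c p.1 * Dv e H p

lemma Lu_contDiff {c : ℝ → ℝ} {H : V → ℝ} (hc : ContDiff ℝ ∞ c)
    (hH : ContDiff ℝ ∞ H) : ContDiff ℝ ∞ (Lu c H) := by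
  have hc' : ContDiff ℝ ∞ (deriv c) := (contDiff_infty_iff_deriv.mp hc).2
  exact ((hc.comp contDiff_fst).mul (Dv_contDiff hH e0)).add
    ((hc'.comp contDiff_fst).mul ((contDiff_snd.fst.mul (Dv_contDiff hH e1)).add
      (contDiff_snd.snd.mul (Dv_contDiff hH e2))))

lemma Ju_contDiff {c : ℝ → ℝ} {H : V → ℝ} (hc : ContDiff ℝ ∞ c)
    (hH : ContDiff ℝ ∞ H) : ContDiff ℝ ∞ (Ju c H) :=
  (hc.comp contDiff_fst).mul ((contDiff_snd.fst.mul (Dv_contDiff hH e2)).sub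
    (contDiff_snd.snd.mul (Dv_contDiff hH e1)))

lemma Pu_contDiff {c : ℝ → ℝ} {H : V → ℝ} (e : V) (hc : ContDiff ℝ ∞ c)
    (hH : ContDiff ℝ ∞ H) : ContDiff ℝ ∞ (Pu e c H) :=
  (hc.comp contDiff_fst).mul (Dv_contDiff hH e)

lemma Dv_Pu {c : ℝ → ℝ} {H : V → ℝ} (hc : ContDiff ℝ ∞ c) (hH : ContDiff ℝ ∞ H)
    (e v p : V) :
    Dv v (Pu e c H) p = deriv c p.1 * v.1 * Dv e H p + c p.1 * Dv v (Dv e H) p := by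
  have hdc : Differentiable ℝ c := hc.differentiable (by norm_num)
  have hdH : Differentiable ℝ (Dv e H) := (Dv_contDiff hH e).differentiable (by norm_num)
  have dA : DifferentiableAt ℝ (fun q : V => c q.1) p := (hdc.comp differentiable_fst) p
  have h1 : Dv v (Pu e c H) p
      = Dv v (fun q => (fun q : V => c q.1) q * (fun q => Dv e H q) q) p := rfl
  rw [h1, Dv_mul dA hdH.differentiableAt, Dv_fst (hdc.differentiableAt)]

lemma Dv_Lu {c : ℝ → ℝ} {H : V → ℝ} (hc : ContDiff ℝ ∞ c) (hH : ContDiff ℝ ∞ H)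
    (v p : V) :
    Dv v (Lu c H) p =
      (deriv c p.1 * v.1) * Dv e0 H p + c p.1 * Dv v (Dv e0 H) p
      + ((deriv (deriv c) p.1 * v.1) * (p.2.1 * Dv e1 H p + p.2.2 * Dv e2 H p)
        + deriv c p.1 * ((v.2.1 * Dv e1 H p + p.2.1 * Dv v (Dv e1 H) p)
          + (v.2.2 * Dv e2 H p + p.2.2 * Dv v (Dv e2 H) p))) := by
  have hdc : Differentiable ℝ c := hc.differentiable (by norm_num)
  have hc' : ContDiff ℝ ∞ (deriv c) := (contDiff_infty_iff_deriv.mp hc).2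
  have hdc' : Differentiable ℝ (deriv c) := hc'.differentiable (by norm_num)
  have hD0 : Differentiable ℝ (Dv e0 H) := (Dv_contDiff hH e0).differentiable (by norm_num)
  have hD1 : Differentiable ℝ (Dv e1 H) := (Dv_contDiff hH e1).differentiable (by norm_num)
  have hD2 : Differentiable ℝ (Dv e2 H) := (Dv_contDiff hH e2).differentiable (by norm_num)
  have dA : DifferentiableAt ℝ (fun q : V => c q.1) p := (hdc.comp differentiable_fst) p
  have dA' : DifferentiableAt ℝ (fun q : V => deriv c q.1) p := (hdc'.comp differentiable_fst) p
  have dX1 : DifferentiableAt ℝ (fun q : V => q.2.1) p := (differentiable_snd.fst) p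
  have dX2 : DifferentiableAt ℝ (fun q : V => q.2.2) p := (differentiable_snd.snd) p
  have dP1 : DifferentiableAt ℝ (fun q : V => q.2.1 * Dv e1 H q) p := dX1.mul (hD1 p)
  have dP2 : DifferentiableAt ℝ (fun q : V => q.2.2 * Dv e2 H q) p := dX2.mul (hD2 p)
  have dT1 : DifferentiableAt ℝ (fun q : V => c q.1 * Dv e0 H q) p := dA.mul (hD0 p)
  have dS : DifferentiableAt ℝ (fun q : V => q.2.1 * Dv e1 H q + q.2.2 * Dv e2 H q) p :=
    dP1.add dP2
  have dT2 : DifferentiableAt ℝ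
      (fun q : V => deriv c q.1 * (q.2.1 * Dv e1 H q + q.2.2 * Dv e2 H q)) p := dA'.mul dS
  have h1 : Dv v (Lu c H) p = Dv v (fun q => (fun q : V => c q.1 * Dv e0 H q) q
      + (fun q : V => deriv c q.1 * (q.2.1 * Dv e1 H q + q.2.2 * Dv e2 H q)) q) p := rfl
  rw [h1, Dv_add dT1 dT2, Dv_mul dA (hD0 p), Dv_mul dA' dS, Dv_add dP1 dP2,
    Dv_mul dX1 (hD1 p), Dv_mul dX2 (hD2 p), Dv_fst hdc.differentiableAt,
    Dv_fst hdc'.differentiableAt, Dv_x1, Dv_x2]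

lemma Dv_Ju {c : ℝ → ℝ} {H : V → ℝ} (hc : ContDiff ℝ ∞ c) (hH : ContDiff ℝ ∞ H)
    (v p : V) :
    Dv v (Ju c H) p =
      (deriv c p.1 * v.1) * (p.2.1 * Dv e2 H p - p.2.2 * Dv e1 H p)
      + c p.1 * ((v.2.1 * Dv e2 H p + p.2.1 * Dv v (Dv e2 H) p)
        - (v.2.2 * Dv e1 H p + p.2.2 * Dv v (Dv e1 H) p)) := by
  have hdc : Differentiable ℝ c := hc.differentiable (by norm_num)
  have hD1 : Differentiable ℝ (Dv e1 H) := (Dv_contDiff hH e1).differentiable (by norm_num)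
  have hD2 : Differentiable ℝ (Dv e2 H) := (Dv_contDiff hH e2).differentiable (by norm_num)
  have dA : DifferentiableAt ℝ (fun q : V => c q.1) p := (hdc.comp differentiable_fst) p
  have dX1 : DifferentiableAt ℝ (fun q : V => q.2.1) p := (differentiable_snd.fst) p
  have dX2 : DifferentiableAt ℝ (fun q : V => q.2.2) p := (differentiable_snd.snd) p
  have dP1 : DifferentiableAt ℝ (fun q : V => q.2.1 * Dv e2 H q) p := dX1.mul (hD2 p)
  have dP2 : DifferentiableAt ℝ (fun q : V => q.2.2 * Dv e1 H q) p := dX2.mul (hD1 p)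
  have dS : DifferentiableAt ℝ (fun q : V => q.2.1 * Dv e2 H q - q.2.2 * Dv e1 H q) p :=
    dP1.sub dP2
  have h1 : Dv v (Ju c H) p = Dv v (fun q => (fun q : V => c q.1) q
      * (fun q : V => q.2.1 * Dv e2 H q - q.2.2 * Dv e1 H q) q) p := rfl
  rw [h1, Dv_mul dA dS, Dv_sub dP1 dP2, Dv_mul dX1 (hD2 p), Dv_mul dX2 (hD1 p),
    Dv_fst hdc.differentiableAt, Dv_x1, Dv_x2]

lemma opL_eq {c : ℝ → ℝ} {H : V → ℝ} (hH : ContDiff ℝ ∞ H) (θ x₁ x₂ : ℝ) :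
    opL c (fun a b d => H (a,b,d)) θ x₁ x₂ = Lu c H (θ,x₁,x₂) := by
  have hd := hH.differentiable (by norm_num)
  simp [opL, Lu, Dθ_eq hd, Dx₁_eq hd, Dx₂_eq hd]

lemma opJ_eq {c : ℝ → ℝ} {H : V → ℝ} (hH : ContDiff ℝ ∞ H) (θ x₁ x₂ : ℝ) :
    opJ c (fun a b d => H (a,b,d)) θ x₁ x₂ = Ju c H (θ,x₁,x₂) := by
  have hd := hH.differentiable (by norm_num)
  simp [opJ, Ju, Dx₁_eq hd, Dx₂_eq hd]

lemma opP0_eq {c : ℝ → ℝ} {H : V → ℝ} (hH : ContDiff ℝ ∞ H) (θ x₁ x₂ : ℝ) :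
    opP 0 c (fun a b d => H (a,b,d)) θ x₁ x₂ = Pu e1 c H (θ,x₁,x₂) := by
  have hd := hH.differentiable (by norm_num)
  simp [opP, Pu, Dx₁_eq hd]

lemma opP1_eq {c : ℝ → ℝ} {H : V → ℝ} (hH : ContDiff ℝ ∞ H) (θ x₁ x₂ : ℝ) :
    opP 1 c (fun a b d => H (a,b,d)) θ x₁ x₂ = Pu e2 c H (θ,x₁,x₂) := by
  have hd := hH.differentiable (by norm_num)
  simp [opP, Pu, Dx₂_eq hd, (by decide : (1:Fin 2) ≠ 0)]

/-- The current-algebra form of the centerless planar Galilean conformal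
algebra: for smooth f, g and smooth F, the commutators [A,B] = A∘B − B∘A
satisfy [L_f,L_g] = L_{fg'−f'g}, [L_f,P^i_g] = P^i_{fg'−f'g},
[L_f,J_g] = J_{fg'}, [J_f,P^i_g] = −Σ_k ε_{ik} P^k_{fg},
[J_f,J_g] = [P^i_f,P^j_g] = 0. -/
theorem current_algebra_realization (f g : ℝ → ℝ)
    (hf : ContDiff ℝ (⊤ : ℕ∞) f) (hg : ContDiff ℝ (⊤ : ℕ∞) g)
    (F : ℝ → ℝ → ℝ → ℝ)
    (hF : ContDiff ℝ (⊤ : ℕ∞) (fun p : ℝ × ℝ × ℝ => F p.1 p.2.1 p.2.2))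
    (θ x₁ x₂ : ℝ) :
    (opL f (opL g F) θ x₁ x₂ - opL g (opL f F) θ x₁ x₂ =
      opL (fun s => f s * deriv g s - deriv f s * g s) F θ x₁ x₂) ∧
    (∀ i : Fin 2, opL f (opP i g F) θ x₁ x₂ - opP i g (opL f F) θ x₁ x₂ =
      opP i (fun s => f s * deriv g s - deriv f s * g s) F θ x₁ x₂) ∧
    (opL f (opJ g F) θ x₁ x₂ - opJ g (opL f F) θ x₁ x₂ =
      opJ (fun s => f s * deriv g s) F θ x₁ x₂) ∧
    (∀ i : Fin 2, opJ f (opP i g F) θ x₁ x₂ - opP i g (opJ f F) θ x₁ x₂ =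
      -∑ k : Fin 2, eps i k * opP k (fun s => f s * g s) F θ x₁ x₂) ∧
    (opJ f (opJ g F) θ x₁ x₂ - opJ g (opJ f F) θ x₁ x₂ = 0) ∧
    (∀ i j : Fin 2, opP i f (opP j g F) θ x₁ x₂ - opP j g (opP i f F) θ x₁ x₂ = 0) := by
  have hFu : ContDiff ℝ ∞ (unc F) := hF.of_le (by simp)
  have hf' : ContDiff ℝ ∞ f := hf.of_le (by simp)
  have hg' : ContDiff ℝ ∞ g := hg.of_le (by simp)
  have hdf : Differentiable ℝ f := hf'.differentiable (by norm_num)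
  have hdg : Differentiable ℝ g := hg'.differentiable (by norm_num)
  have hf2 : ContDiff ℝ ∞ (deriv f) := (contDiff_infty_iff_deriv.mp hf').2
  have hg2 : ContDiff ℝ ∞ (deriv g) := (contDiff_infty_iff_deriv.mp hg').2
  have hdf' : Differentiable ℝ (deriv f) := hf2.differentiable (by norm_num)
  have hdg' : Differentiable ℝ (deriv g) := hg2.differentiable (by norm_num)
  have expL : ∀ (c : ℝ → ℝ) (K : V → ℝ), Lu c K (θ,x₁,x₂) =
      c θ * Dv e0 K (θ,x₁,x₂)
      + deriv c θ * (x₁ * Dv e1 K (θ,x₁,x₂) + x₂ * Dv e2 K (θ,x₁,x₂)) := fun c K => rfl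
  have expJ : ∀ (c : ℝ → ℝ) (K : V → ℝ), Ju c K (θ,x₁,x₂) =
      c θ * (x₁ * Dv e2 K (θ,x₁,x₂) - x₂ * Dv e1 K (θ,x₁,x₂)) := fun c K => rfl
  have expP : ∀ (e : V) (c : ℝ → ℝ) (K : V → ℝ),
      Pu e c K (θ,x₁,x₂) = c θ * Dv e K (θ,x₁,x₂) := fun e c K => rfl
  have eLf : opL f F = fun a b d => Lu f (unc F) (a,b,d) :=
    funext fun a => funext fun b => funext fun d => opL_eq hFu a b d
  have eLg : opL g F = fun a b d => Lu g (unc F) (a,b,d) :=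
    funext fun a => funext fun b => funext fun d => opL_eq hFu a b d
  have eJf : opJ f F = fun a b d => Ju f (unc F) (a,b,d) :=
    funext fun a => funext fun b => funext fun d => opJ_eq hFu a b d
  have eJg : opJ g F = fun a b d => Ju g (unc F) (a,b,d) :=
    funext fun a => funext fun b => funext fun d => opJ_eq hFu a b d
  have eP0g : opP 0 g F = fun a b d => Pu e1 g (unc F) (a,b,d) :=
    funext fun a => funext fun b => funext fun d => opP0_eq hFu a b d
  have eP1g : opP 1 g F = fun a b d => Pu e2 g (unc F) (a,b,d) :=
    funext fun a => funext fun b => funext fun d => opP1_eq hFu a b d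
  have eP0f : opP 0 f F = fun a b d => Pu e1 f (unc F) (a,b,d) :=
    funext fun a => funext fun b => funext fun d => opP0_eq hFu a b d
  have eP1f : opP 1 f F = fun a b d => Pu e2 f (unc F) (a,b,d) :=
    funext fun a => funext fun b => funext fun d => opP1_eq hFu a b d
  have e00 : eps 0 0 = 0 := by simp [eps]
  have e01 : eps 0 1 = 1 := by simp [eps]
  have e10 : eps 1 0 = -1 := by simp [eps]
  have e11 : eps 1 1 = 0 := by simp [eps]
  refine ⟨?_, ?_, ?_, ?_, ?_, ?_⟩
  · -- [L_f, L_g] = L_{fg' - f'g}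
    have hdsub : deriv (fun s => f s * deriv g s - deriv f s * g s) θ =
        f θ * deriv (deriv g) θ - deriv (deriv f) θ * g θ := by
      rw [deriv_fun_sub (f := fun s => f s * deriv g s) (g := fun s => deriv f s * g s) ((hdf θ).mul (hdg' θ)) ((hdf' θ).mul (hdg θ)),
        deriv_fun_mul (hdf θ) (hdg' θ), deriv_fun_mul (hdf' θ) (hdg θ)]
      ring
    have h1 : opL f (opL g F) θ x₁ x₂ = Lu f (Lu g (unc F)) (θ,x₁,x₂) := by
      rw [eLg]; exact opL_eq (Lu_contDiff hg' hFu) θ x₁ x₂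
    have h2 : opL g (opL f F) θ x₁ x₂ = Lu g (Lu f (unc F)) (θ,x₁,x₂) := by
      rw [eLf]; exact opL_eq (Lu_contDiff hf' hFu) θ x₁ x₂
    have h3 : opL (fun s => f s * deriv g s - deriv f s * g s) F θ x₁ x₂ =
        Lu (fun s => f s * deriv g s - deriv f s * g s) (unc F) (θ,x₁,x₂) :=
      opL_eq hFu θ x₁ x₂
    rw [h1, h2, h3]
    simp only [expL]
    rw [Dv_Lu hg' hFu e0 (θ,x₁,x₂), Dv_Lu hg' hFu e1 (θ,x₁,x₂), Dv_Lu hg' hFu e2 (θ,x₁,x₂),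
      Dv_Lu hf' hFu e0 (θ,x₁,x₂), Dv_Lu hf' hFu e1 (θ,x₁,x₂), Dv_Lu hf' hFu e2 (θ,x₁,x₂),
      hdsub]
    simp only [show e0.1 = (1:ℝ) from rfl, show e0.2.1 = (0:ℝ) from rfl,
      show e0.2.2 = (0:ℝ) from rfl, show e1.1 = (0:ℝ) from rfl,
      show e1.2.1 = (1:ℝ) from rfl, show e1.2.2 = (0:ℝ) from rfl,
      show e2.1 = (0:ℝ) from rfl, show e2.2.1 = (0:ℝ) from rfl,
      show e2.2.2 = (1:ℝ) from rfl]
    try simp only [Dv_symm hFu e1 e0 (θ,x₁,x₂), Dv_symm hFu e2 e0 (θ,x₁,x₂),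
      Dv_symm hFu e2 e1 (θ,x₁,x₂)]
    ring
  · -- [L_f, P^i_g] = P^i_{fg' - f'g}
    intro i
    by_cases hi : i = 0
    · subst hi
      have h1 : opL f (opP 0 g F) θ x₁ x₂ = Lu f (Pu e1 g (unc F)) (θ,x₁,x₂) := by
        rw [eP0g]; exact opL_eq (Pu_contDiff e1 hg' hFu) θ x₁ x₂
      have h2 : opP 0 g (opL f F) θ x₁ x₂ = Pu e1 g (Lu f (unc F)) (θ,x₁,x₂) := by
        rw [eLf]; exact opP0_eq (Lu_contDiff hf' hFu) θ x₁ x₂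
      have h3 : opP 0 (fun s => f s * deriv g s - deriv f s * g s) F θ x₁ x₂ =
          Pu e1 (fun s => f s * deriv g s - deriv f s * g s) (unc F) (θ,x₁,x₂) :=
        opP0_eq hFu θ x₁ x₂
      have hdsub : deriv (fun s => f s * deriv g s - deriv f s * g s) θ =
          f θ * deriv (deriv g) θ - deriv (deriv f) θ * g θ := by
        rw [deriv_fun_sub (f := fun s => f s * deriv g s) (g := fun s => deriv f s * g s) ((hdf θ).mul (hdg' θ)) ((hdf' θ).mul (hdg θ)),
          deriv_fun_mul (hdf θ) (hdg' θ), deriv_fun_mul (hdf' θ) (hdg θ)]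
        ring
      rw [h1, h2, h3]
      simp only [expL, expP]
      rw [Dv_Pu hg' hFu e1 e0 (θ,x₁,x₂), Dv_Pu hg' hFu e1 e1 (θ,x₁,x₂),
        Dv_Pu hg' hFu e1 e2 (θ,x₁,x₂), Dv_Lu hf' hFu e1 (θ,x₁,x₂)]
      simp only [show e0.1 = (1:ℝ) from rfl, show e0.2.1 = (0:ℝ) from rfl,
        show e0.2.2 = (0:ℝ) from rfl, show e1.1 = (0:ℝ) from rfl,
        show e1.2.1 = (1:ℝ) from rfl, show e1.2.2 = (0:ℝ) from rfl,
        show e2.1 = (0:ℝ) from rfl, show e2.2.1 = (0:ℝ) from rfl,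
        show e2.2.2 = (1:ℝ) from rfl]
      try simp only [Dv_symm hFu e1 e0 (θ,x₁,x₂), Dv_symm hFu e2 e0 (θ,x₁,x₂),
        Dv_symm hFu e2 e1 (θ,x₁,x₂)]
      ring
    · have hi1 : i = 1 := Fin.eq_one_of_ne_zero i hi
      subst hi1
      -- i = 1
      have h1 : opL f (opP 1 g F) θ x₁ x₂ = Lu f (Pu e2 g (unc F)) (θ,x₁,x₂) := by
        rw [eP1g]; exact opL_eq (Pu_contDiff e2 hg' hFu) θ x₁ x₂
      have h2 : opP 1 g (opL f F) θ x₁ x₂ = Pu e2 g (Lu f (unc F)) (θ,x₁,x₂) := by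
        rw [eLf]; exact opP1_eq (Lu_contDiff hf' hFu) θ x₁ x₂
      have h3 : opP 1 (fun s => f s * deriv g s - deriv f s * g s) F θ x₁ x₂ =
          Pu e2 (fun s => f s * deriv g s - deriv f s * g s) (unc F) (θ,x₁,x₂) :=
        opP1_eq hFu θ x₁ x₂
      have hdsub : deriv (fun s => f s * deriv g s - deriv f s * g s) θ =
          f θ * deriv (deriv g) θ - deriv (deriv f) θ * g θ := by
        rw [deriv_fun_sub (f := fun s => f s * deriv g s) (g := fun s => deriv f s * g s) ((hdf θ).mul (hdg' θ)) ((hdf' θ).mul (hdg θ)),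
          deriv_fun_mul (hdf θ) (hdg' θ), deriv_fun_mul (hdf' θ) (hdg θ)]
        ring
      rw [h1, h2, h3]
      simp only [expL, expP]
      rw [Dv_Pu hg' hFu e2 e0 (θ,x₁,x₂), Dv_Pu hg' hFu e2 e1 (θ,x₁,x₂),
        Dv_Pu hg' hFu e2 e2 (θ,x₁,x₂), Dv_Lu hf' hFu e2 (θ,x₁,x₂)]
      simp only [show e0.1 = (1:ℝ) from rfl, show e0.2.1 = (0:ℝ) from rfl,
        show e0.2.2 = (0:ℝ) from rfl, show e1.1 = (0:ℝ) from rfl,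
        show e1.2.1 = (1:ℝ) from rfl, show e1.2.2 = (0:ℝ) from rfl,
        show e2.1 = (0:ℝ) from rfl, show e2.2.1 = (0:ℝ) from rfl,
        show e2.2.2 = (1:ℝ) from rfl]
      try simp only [Dv_symm hFu e1 e0 (θ,x₁,x₂), Dv_symm hFu e2 e0 (θ,x₁,x₂),
        Dv_symm hFu e2 e1 (θ,x₁,x₂)]
      ring
  · -- [L_f, J_g] = J_{fg'}
    have h1 : opL f (opJ g F) θ x₁ x₂ = Lu f (Ju g (unc F)) (θ,x₁,x₂) := by
      rw [eJg]; exact opL_eq (Ju_contDiff hg' hFu) θ x₁ x₂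
    have h2 : opJ g (opL f F) θ x₁ x₂ = Ju g (Lu f (unc F)) (θ,x₁,x₂) := by
      rw [eLf]; exact opJ_eq (Lu_contDiff hf' hFu) θ x₁ x₂
    have h3 : opJ (fun s => f s * deriv g s) F θ x₁ x₂ =
        Ju (fun s => f s * deriv g s) (unc F) (θ,x₁,x₂) := opJ_eq hFu θ x₁ x₂
    rw [h1, h2, h3]
    simp only [expL, expJ]
    rw [Dv_Ju hg' hFu e0 (θ,x₁,x₂), Dv_Ju hg' hFu e1 (θ,x₁,x₂), Dv_Ju hg' hFu e2 (θ,x₁,x₂),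
      Dv_Lu hf' hFu e1 (θ,x₁,x₂), Dv_Lu hf' hFu e2 (θ,x₁,x₂)]
    simp only [show e0.1 = (1:ℝ) from rfl, show e0.2.1 = (0:ℝ) from rfl,
      show e0.2.2 = (0:ℝ) from rfl, show e1.1 = (0:ℝ) from rfl,
      show e1.2.1 = (1:ℝ) from rfl, show e1.2.2 = (0:ℝ) from rfl,
      show e2.1 = (0:ℝ) from rfl, show e2.2.1 = (0:ℝ) from rfl,
      show e2.2.2 = (1:ℝ) from rfl]
    try simp only [Dv_symm hFu e1 e0 (θ,x₁,x₂), Dv_symm hFu e2 e0 (θ,x₁,x₂),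
      Dv_symm hFu e2 e1 (θ,x₁,x₂)]
    ring
  · -- [J_f, P^i_g] = -∑ ε_{ik} P^k_{fg}
    intro i
    by_cases hi : i = 0
    · subst hi
      have h1 : opJ f (opP 0 g F) θ x₁ x₂ = Ju f (Pu e1 g (unc F)) (θ,x₁,x₂) := by
        rw [eP0g]; exact opJ_eq (Pu_contDiff e1 hg' hFu) θ x₁ x₂
      have h2 : opP 0 g (opJ f F) θ x₁ x₂ = Pu e1 g (Ju f (unc F)) (θ,x₁,x₂) := by
        rw [eJf]; exact opP0_eq (Ju_contDiff hf' hFu) θ x₁ x₂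
      have h3 : opP 0 (fun s => f s * g s) F θ x₁ x₂ =
          Pu e1 (fun s => f s * g s) (unc F) (θ,x₁,x₂) := opP0_eq hFu θ x₁ x₂
      have h4 : opP 1 (fun s => f s * g s) F θ x₁ x₂ =
          Pu e2 (fun s => f s * g s) (unc F) (θ,x₁,x₂) := opP1_eq hFu θ x₁ x₂
      rw [Fin.sum_univ_two, h1, h2, h3, h4, e00, e01]
      simp only [expJ, expP]
      rw [Dv_Pu hg' hFu e1 e1 (θ,x₁,x₂), Dv_Pu hg' hFu e1 e2 (θ,x₁,x₂),
        Dv_Ju hf' hFu e1 (θ,x₁,x₂)]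
      simp only [show e0.1 = (1:ℝ) from rfl, show e0.2.1 = (0:ℝ) from rfl,
        show e0.2.2 = (0:ℝ) from rfl, show e1.1 = (0:ℝ) from rfl,
        show e1.2.1 = (1:ℝ) from rfl, show e1.2.2 = (0:ℝ) from rfl,
        show e2.1 = (0:ℝ) from rfl, show e2.2.1 = (0:ℝ) from rfl,
        show e2.2.2 = (1:ℝ) from rfl]
      try simp only [Dv_symm hFu e1 e0 (θ,x₁,x₂), Dv_symm hFu e2 e0 (θ,x₁,x₂),
        Dv_symm hFu e2 e1 (θ,x₁,x₂)]
      ring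
    · have hi1 : i = 1 := Fin.eq_one_of_ne_zero i hi
      subst hi1
      have h1 : opJ f (opP 1 g F) θ x₁ x₂ = Ju f (Pu e2 g (unc F)) (θ,x₁,x₂) := by
        rw [eP1g]; exact opJ_eq (Pu_contDiff e2 hg' hFu) θ x₁ x₂
      have h2 : opP 1 g (opJ f F) θ x₁ x₂ = Pu e2 g (Ju f (unc F)) (θ,x₁,x₂) := by
        rw [eJf]; exact opP1_eq (Ju_contDiff hf' hFu) θ x₁ x₂
      have h3 : opP 0 (fun s => f s * g s) F θ x₁ x₂ =
          Pu e1 (fun s => f s * g s) (unc F) (θ,x₁,x₂) := opP0_eq hFu θ x₁ x₂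
      have h4 : opP 1 (fun s => f s * g s) F θ x₁ x₂ =
          Pu e2 (fun s => f s * g s) (unc F) (θ,x₁,x₂) := opP1_eq hFu θ x₁ x₂
      rw [Fin.sum_univ_two, h1, h2, h3, h4, e10, e11]
      simp only [expJ, expP]
      rw [Dv_Pu hg' hFu e2 e1 (θ,x₁,x₂), Dv_Pu hg' hFu e2 e2 (θ,x₁,x₂),
        Dv_Ju hf' hFu e2 (θ,x₁,x₂)]
      simp only [show e0.1 = (1:ℝ) from rfl, show e0.2.1 = (0:ℝ) from rfl,
        show e0.2.2 = (0:ℝ) from rfl, show e1.1 = (0:ℝ) from rfl,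
        show e1.2.1 = (1:ℝ) from rfl, show e1.2.2 = (0:ℝ) from rfl,
        show e2.1 = (0:ℝ) from rfl, show e2.2.1 = (0:ℝ) from rfl,
        show e2.2.2 = (1:ℝ) from rfl]
      try simp only [Dv_symm hFu e1 e0 (θ,x₁,x₂), Dv_symm hFu e2 e0 (θ,x₁,x₂),
        Dv_symm hFu e2 e1 (θ,x₁,x₂)]
      ring
  · -- [J_f, J_g] = 0
    have h1 : opJ f (opJ g F) θ x₁ x₂ = Ju f (Ju g (unc F)) (θ,x₁,x₂) := by
      rw [eJg]; exact opJ_eq (Ju_contDiff hg' hFu) θ x₁ x₂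
    have h2 : opJ g (opJ f F) θ x₁ x₂ = Ju g (Ju f (unc F)) (θ,x₁,x₂) := by
      rw [eJf]; exact opJ_eq (Ju_contDiff hf' hFu) θ x₁ x₂
    rw [h1, h2]
    simp only [expJ]
    rw [Dv_Ju hg' hFu e1 (θ,x₁,x₂), Dv_Ju hg' hFu e2 (θ,x₁,x₂),
      Dv_Ju hf' hFu e1 (θ,x₁,x₂), Dv_Ju hf' hFu e2 (θ,x₁,x₂)]
    simp only [show e0.1 = (1:ℝ) from rfl, show e0.2.1 = (0:ℝ) from rfl,
      show e0.2.2 = (0:ℝ) from rfl, show e1.1 = (0:ℝ) from rfl,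
      show e1.2.1 = (1:ℝ) from rfl, show e1.2.2 = (0:ℝ) from rfl,
      show e2.1 = (0:ℝ) from rfl, show e2.2.1 = (0:ℝ) from rfl,
      show e2.2.2 = (1:ℝ) from rfl]
    try simp only [Dv_symm hFu e1 e0 (θ,x₁,x₂), Dv_symm hFu e2 e0 (θ,x₁,x₂),
      Dv_symm hFu e2 e1 (θ,x₁,x₂)]
    ring
  · -- [P^i_f, P^j_g] = 0
    intro i j
    by_cases hi : i = 0 <;> by_cases hj : j = 0
    · subst hi; subst hj
      have h1 : opP 0 f (opP 0 g F) θ x₁ x₂ = Pu e1 f (Pu e1 g (unc F)) (θ,x₁,x₂) := by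
        rw [eP0g]; exact opP0_eq (Pu_contDiff e1 hg' hFu) θ x₁ x₂
      have h2 : opP 0 g (opP 0 f F) θ x₁ x₂ = Pu e1 g (Pu e1 f (unc F)) (θ,x₁,x₂) := by
        rw [eP0f]; exact opP0_eq (Pu_contDiff e1 hf' hFu) θ x₁ x₂
      rw [h1, h2]
      simp only [expP]
      rw [Dv_Pu hg' hFu e1 e1 (θ,x₁,x₂), Dv_Pu hf' hFu e1 e1 (θ,x₁,x₂)]
      simp only [show e0.1 = (1:ℝ) from rfl, show e0.2.1 = (0:ℝ) from rfl,
        show e0.2.2 = (0:ℝ) from rfl, show e1.1 = (0:ℝ) from rfl,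
        show e1.2.1 = (1:ℝ) from rfl, show e1.2.2 = (0:ℝ) from rfl,
        show e2.1 = (0:ℝ) from rfl, show e2.2.1 = (0:ℝ) from rfl,
        show e2.2.2 = (1:ℝ) from rfl]
      try simp only [Dv_symm hFu e1 e0 (θ,x₁,x₂), Dv_symm hFu e2 e0 (θ,x₁,x₂),
        Dv_symm hFu e2 e1 (θ,x₁,x₂)]
      ring
    · subst hi
      have hj1 : j = 1 := Fin.eq_one_of_ne_zero j hj
      subst hj1
      have h1 : opP 0 f (opP 1 g F) θ x₁ x₂ = Pu e1 f (Pu e2 g (unc F)) (θ,x₁,x₂) := by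
        rw [eP1g]; exact opP0_eq (Pu_contDiff e2 hg' hFu) θ x₁ x₂
      have h2 : opP 1 g (opP 0 f F) θ x₁ x₂ = Pu e2 g (Pu e1 f (unc F)) (θ,x₁,x₂) := by
        rw [eP0f]; exact opP1_eq (Pu_contDiff e1 hf' hFu) θ x₁ x₂
      rw [h1, h2]
      simp only [expP]
      rw [Dv_Pu hg' hFu e2 e1 (θ,x₁,x₂), Dv_Pu hf' hFu e1 e2 (θ,x₁,x₂)]
      simp only [show e0.1 = (1:ℝ) from rfl, show e0.2.1 = (0:ℝ) from rfl,
        show e0.2.2 = (0:ℝ) from rfl, show e1.1 = (0:ℝ) from rfl,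
        show e1.2.1 = (1:ℝ) from rfl, show e1.2.2 = (0:ℝ) from rfl,
        show e2.1 = (0:ℝ) from rfl, show e2.2.1 = (0:ℝ) from rfl,
        show e2.2.2 = (1:ℝ) from rfl]
      try simp only [Dv_symm hFu e1 e0 (θ,x₁,x₂), Dv_symm hFu e2 e0 (θ,x₁,x₂),
        Dv_symm hFu e2 e1 (θ,x₁,x₂)]
      ring
    · have hi1 : i = 1 := Fin.eq_one_of_ne_zero i hi
      subst hi1; subst hj
      have h1 : opP 1 f (opP 0 g F) θ x₁ x₂ = Pu e2 f (Pu e1 g (unc F)) (θ,x₁,x₂) := by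
        rw [eP0g]; exact opP1_eq (Pu_contDiff e1 hg' hFu) θ x₁ x₂
      have h2 : opP 0 g (opP 1 f F) θ x₁ x₂ = Pu e1 g (Pu e2 f (unc F)) (θ,x₁,x₂) := by
        rw [eP1f]; exact opP0_eq (Pu_contDiff e2 hf' hFu) θ x₁ x₂
      rw [h1, h2]
      simp only [expP]
      rw [Dv_Pu hg' hFu e1 e2 (θ,x₁,x₂), Dv_Pu hf' hFu e2 e1 (θ,x₁,x₂)]
      simp only [show e0.1 = (1:ℝ) from rfl, show e0.2.1 = (0:ℝ) from rfl,
        show e0.2.2 = (0:ℝ) from rfl, show e1.1 = (0:ℝ) from rfl,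
        show e1.2.1 = (1:ℝ) from rfl, show e1.2.2 = (0:ℝ) from rfl,
        show e2.1 = (0:ℝ) from rfl, show e2.2.1 = (0:ℝ) from rfl,
        show e2.2.2 = (1:ℝ) from rfl]
      try simp only [Dv_symm hFu e1 e0 (θ,x₁,x₂), Dv_symm hFu e2 e0 (θ,x₁,x₂),
        Dv_symm hFu e2 e1 (θ,x₁,x₂)]
      ring
    · have hi1 : i = 1 := Fin.eq_one_of_ne_zero i hi
      have hj1 : j = 1 := Fin.eq_one_of_ne_zero j hj
      subst hi1; subst hj1
      have h1 : opP 1 f (opP 1 g F) θ x₁ x₂ = Pu e2 f (Pu e2 g (unc F)) (θ,x₁,x₂) := by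
        rw [eP1g]; exact opP1_eq (Pu_contDiff e2 hg' hFu) θ x₁ x₂
      have h2 : opP 1 g (opP 1 f F) θ x₁ x₂ = Pu e2 g (Pu e2 f (unc F)) (θ,x₁,x₂) := by
        rw [eP1f]; exact opP1_eq (Pu_contDiff e2 hf' hFu) θ x₁ x₂
      rw [h1, h2]
      simp only [expP]
      rw [Dv_Pu hg' hFu e2 e2 (θ,x₁,x₂), Dv_Pu hf' hFu e2 e2 (θ,x₁,x₂)]
      simp only [show e0.1 = (1:ℝ) from rfl, show e0.2.1 = (0:ℝ) from rfl,
        show e0.2.2 = (0:ℝ) from rfl, show e1.1 = (0:ℝ) from rfl,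
        show e1.2.1 = (1:ℝ) from rfl, show e1.2.2 = (0:ℝ) from rfl,
        show e2.1 = (0:ℝ) from rfl, show e2.2.1 = (0:ℝ) from rfl,
        show e2.2.2 = (1:ℝ) from rfl]
      try simp only [Dv_symm hFu e1 e0 (θ,x₁,x₂), Dv_symm hFu e2 e0 (θ,x₁,x₂),
        Dv_symm hFu e2 e1 (θ,x₁,x₂)]
      ring


end
end

section
/- Fix λ ∈ ℝ and a ∈ ℝ. For a smooth function φ : ℝ → ℝ with everywhere positive derivative, define a map T_φ on quadruples (γ₀, γ₁, γ₂, γ₃) of smooth real-valued functions on ℝ by T_φ(γ₀, γ₁, γ₂, γ₃) = ( a·S(φ) + (γ₀∘φ)(φ')², (γ₁∘φ)(φ')², (γ₂∘φ)(φ')², (γ₃∘φ)·φ' ), where S(φ) = φ'''/φ' − (3/2)(φ''/φ')² is the Schwarzian derivative. Then for any two such φ, ψ one has T_ψ(T_φ(γ₀,γ₁,γ₂,γ₃)) = T_{φ∘ψ}(γ₀,γ₁,γ₂,γ₃). -/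
/-!
STATEMENT 12: Fix λ ∈ ℝ... (actually: fix a ∈ ℝ).  For smooth φ with positive
derivative define T_φ(γ₀,γ₁,γ₂,γ₃) = (a·S(φ) + (γ₀∘φ)(φ')², (γ₁∘φ)(φ')²,
(γ₂∘φ)(φ')², (γ₃∘φ)·φ').  Then T_ψ ∘ T_φ = T_{φ∘ψ}: the coadjoint action of
Diff(S¹) of Proposition 3 is a representation.
-/

noncomputable section

/-- The Schwarzian derivative S(φ) = φ'''/φ' − (3/2)(φ''/φ')². -/
def schwarzian (f : ℝ → ℝ) : ℝ → ℝ :=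
  fun t =>
    deriv (deriv (deriv f)) t / deriv f t -
      (3 / 2) * (deriv (deriv f) t / deriv f t) ^ 2

/-- The coadjoint action `T_φ` of a diffeomorphism `φ` on a quadruple
(γ₀, γ₁, γ₂, γ₃) of functions (densities of weights 2, 2, 2, 1), with central
charge `a`:
T_φ(γ₀,γ₁,γ₂,γ₃) = (a·S(φ) + (γ₀∘φ)(φ')², (γ₁∘φ)(φ')², (γ₂∘φ)(φ')², (γ₃∘φ)·φ'). -/
def coadT (a : ℝ) (φ : ℝ → ℝ) :
    (ℝ → ℝ) × (ℝ → ℝ) × (ℝ → ℝ) × (ℝ → ℝ) → (ℝ → ℝ) × (ℝ → ℝ) × (ℝ → ℝ) × (ℝ → ℝ) :=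
  fun γ =>
    (fun t => a * schwarzian φ t + γ.1 (φ t) * (deriv φ t) ^ 2,
     fun t => γ.2.1 (φ t) * (deriv φ t) ^ 2,
     fun t => γ.2.2.1 (φ t) * (deriv φ t) ^ 2,
     fun t => γ.2.2.2 (φ t) * deriv φ t)

private lemma diffOf {f : ℝ → ℝ} (hf : ContDiff ℝ (⊤ : ℕ∞) f) : Differentiable ℝ f :=
  (contDiff_infty_iff_deriv.mp hf).1

private lemma derivSmooth {f : ℝ → ℝ} (hf : ContDiff ℝ (⊤ : ℕ∞) f) :
    ContDiff ℝ (⊤ : ℕ∞) (deriv f) :=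
  (contDiff_infty_iff_deriv.mp hf).2

private lemma deriv_comp_fun (φ ψ : ℝ → ℝ) (hφ : ContDiff ℝ (⊤ : ℕ∞) φ)
    (hψ : ContDiff ℝ (⊤ : ℕ∞) ψ) :
    deriv (φ ∘ ψ) = fun t => deriv φ (ψ t) * deriv ψ t := by
  funext t
  exact deriv_comp t (diffOf hφ (ψ t)) (diffOf hψ t)

private lemma deriv2_comp_fun (φ ψ : ℝ → ℝ) (hφ : ContDiff ℝ (⊤ : ℕ∞) φ)
    (hψ : ContDiff ℝ (⊤ : ℕ∞) ψ) :
    deriv (deriv (φ ∘ ψ)) = fun t =>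
      deriv (deriv φ) (ψ t) * (deriv ψ t) ^ 2 + deriv φ (ψ t) * deriv (deriv ψ) t := by
  have hφ1 := derivSmooth hφ
  have hψ1 := derivSmooth hψ
  rw [deriv_comp_fun φ ψ hφ hψ]
  funext t
  have dA : DifferentiableAt ℝ (fun t => deriv φ (ψ t)) t :=
    (diffOf hφ1 (ψ t)).comp t (diffOf hψ t)
  have dB : DifferentiableAt ℝ (deriv ψ) t := diffOf hψ1 t
  have h1 : deriv (fun t => deriv φ (ψ t)) t = deriv (deriv φ) (ψ t) * deriv ψ t :=
    deriv_comp t (diffOf hφ1 (ψ t)) (diffOf hψ t)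
  rw [deriv_fun_mul dA dB, h1]
  ring

private lemma deriv3_comp_fun (φ ψ : ℝ → ℝ) (hφ : ContDiff ℝ (⊤ : ℕ∞) φ)
    (hψ : ContDiff ℝ (⊤ : ℕ∞) ψ) :
    deriv (deriv (deriv (φ ∘ ψ))) = fun t =>
      deriv (deriv (deriv φ)) (ψ t) * (deriv ψ t) ^ 3
        + 3 * deriv (deriv φ) (ψ t) * deriv ψ t * deriv (deriv ψ) t
        + deriv φ (ψ t) * deriv (deriv (deriv ψ)) t := by
  have hφ1 := derivSmooth hφ
  have hψ1 := derivSmooth hψ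
  have hφ2 := derivSmooth hφ1
  have hψ2 := derivSmooth hψ1
  rw [deriv2_comp_fun φ ψ hφ hψ]
  funext t
  have dψ : DifferentiableAt ℝ ψ t := diffOf hψ t
  have dA : DifferentiableAt ℝ (fun t => deriv (deriv φ) (ψ t)) t :=
    (diffOf hφ2 (ψ t)).comp t dψ
  have dB : DifferentiableAt ℝ (fun t => (deriv ψ t) ^ 2) t := (diffOf hψ1 t).pow 2
  have dC : DifferentiableAt ℝ (fun t => deriv φ (ψ t)) t := (diffOf hφ1 (ψ t)).comp t dψ
  have dD : DifferentiableAt ℝ (deriv (deriv ψ)) t := diffOf hψ2 t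
  have h1 : deriv (fun t => deriv (deriv φ) (ψ t)) t
      = deriv (deriv (deriv φ)) (ψ t) * deriv ψ t :=
    deriv_comp t (diffOf hφ2 (ψ t)) dψ
  have h2 : deriv (fun t => deriv φ (ψ t)) t = deriv (deriv φ) (ψ t) * deriv ψ t :=
    deriv_comp t (diffOf hφ1 (ψ t)) dψ
  have h3 : deriv (fun t => (deriv ψ t) ^ 2) t
      = 2 * deriv ψ t ^ 1 * deriv (deriv ψ) t := by
    simpa using deriv_fun_pow (diffOf hψ1 t) 2
  rw [deriv_fun_add (dA.fun_mul dB) (dC.fun_mul dD), deriv_fun_mul dA dB, deriv_fun_mul dC dD, h1, h2, h3]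
  ring

private lemma schwarzian_comp (φ ψ : ℝ → ℝ) (hφ : ContDiff ℝ (⊤ : ℕ∞) φ)
    (hψ : ContDiff ℝ (⊤ : ℕ∞) ψ)
    (hφ' : ∀ t : ℝ, 0 < deriv φ t) (hψ' : ∀ t : ℝ, 0 < deriv ψ t) (t : ℝ) :
    schwarzian (φ ∘ ψ) t = schwarzian φ (ψ t) * (deriv ψ t) ^ 2 + schwarzian ψ t := by
  have hp : deriv φ (ψ t) ≠ 0 := (hφ' (ψ t)).ne'
  have hq : deriv ψ t ≠ 0 := (hψ' t).ne'
  simp only [schwarzian]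
  rw [deriv3_comp_fun φ ψ hφ hψ]
  rw [deriv2_comp_fun φ ψ hφ hψ]
  rw [deriv_comp_fun φ ψ hφ hψ]
  field_simp
  ring

/-- The coadjoint action of Diff(S¹) on the regular dual of the centrally
extended planar Galilean conformal algebra is a (right) representation:
T_ψ(T_φ(γ)) = T_{φ∘ψ}(γ) for smooth φ, ψ with everywhere positive derivative
and smooth γ₀, γ₁, γ₂, γ₃. -/
theorem coadT_comp (a : ℝ) (φ ψ : ℝ → ℝ)
    (hφ : ContDiff ℝ (⊤ : ℕ∞) φ) (hψ : ContDiff ℝ (⊤ : ℕ∞) ψ)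
    (hφ' : ∀ t : ℝ, 0 < deriv φ t) (hψ' : ∀ t : ℝ, 0 < deriv ψ t)
    (γ₀ γ₁ γ₂ γ₃ : ℝ → ℝ)
    (hγ₀ : ContDiff ℝ (⊤ : ℕ∞) γ₀) (hγ₁ : ContDiff ℝ (⊤ : ℕ∞) γ₁)
    (hγ₂ : ContDiff ℝ (⊤ : ℕ∞) γ₂) (hγ₃ : ContDiff ℝ (⊤ : ℕ∞) γ₃) :
    coadT a ψ (coadT a φ (γ₀, γ₁, γ₂, γ₃)) = coadT a (φ ∘ ψ) (γ₀, γ₁, γ₂, γ₃) := by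
  have hφi : ContDiff ℝ (⊤ : ℕ∞) φ := hφ.of_le (by simp)
  have hψi : ContDiff ℝ (⊤ : ℕ∞) ψ := hψ.of_le (by simp)
  have hd := deriv_comp_fun φ ψ hφi hψi
  simp only [coadT, Prod.mk.injEq]
  refine ⟨?_, ?_, ?_, ?_⟩ <;> funext t <;>
    simp only [Function.comp_apply, hd, schwarzian_comp φ ψ hφi hψi hφ' hψ' t] <;> ring

end
end
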